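/- arXiv:1508.07594 — 2 statements merged into one kernel-verified Lean document; each statement's English description precedes it below -/
import Mathlib

section
/- Let P ⊆ ℝ^d be a generalized polyhedron and let v ∈ P be a point that is not an algebraic vertex of P. Let n be a unit vector, let h = {x ∈ ℝ^d : ⟨n,x⟩ = ⟨n,v⟩} be the hyperplane through v with normal n, and let C = tcone(P,v). Then the signed section of the indicator function [C] by h, i.e. the function x ↦ lim_{ε→0⁺}[C](x+εn) − lim_{ε→0⁺}[C](x−εn) (defined at those x ∈ h where both limits exist, which is almost every x ∈ h with respect to (d−1)-dimensional Hausdorff measure on h), agrees almost everywhere on h with a finite real linear combination of indicator functions of line-cones contained in h (a line-cone in h being a finite union of convex polyhedra contained in h that is invariant under translation by some nonzero vector parallel to h). -/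
/-!
A generalized polyhedron `S` contains or misses an initial piece of every ray, so the one-sided
limits of `[S]` at `x` in direction `m` exist everywhere and equal the indicator of
`raySet S m = {x | x + ε • m ∈ S for small ε > 0}` at `x`.

Since `v` is not an algebraic vertex, `[tcone P v] = ∑ αᵢ [Eᵢ]` a.e. for line-cones `Eᵢ`. Both
sides are locally constant off finitely many facet hyperplanes, and from `μH[d-1]`-a.e. point of
`h` the rays in directions `±n` avoid those, so the signed section of `tcone P v` is a.e. the same
combination of the signed sections of the `Eᵢ`. All such a.e. statements rest on one fact: a
hyperplane not containing `h` meets it in a `μH[d-1]`-null set.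

For a line-cone `E` with direction `u`: if `u` is transversal to `h`, translating along `u` turns
`±n` into vectors parallel to `h`, so `E` looks the same from both sides of `h` and its signed
section vanishes a.e.; if `u` is parallel to `h`, each one-sided section is a.e. equal to its
closure, a finite union of convex polyhedra in `h` that is still invariant under `u`.
-/

open MeasureTheory Filter Topology RealInnerProductSpace

noncomputable section

/-- Euclidean space `ℝ^d`. -/
abbrev Euc (d : ℕ) := EuclideanSpace ℝ (Fin d)

/-- A convex polyhedron: an intersection of finitely many closed half-spaces. -/
def IsConvexPolyhedron {d : ℕ} (P : Set (Euc d)) : Prop :=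
  ∃ (n : ℕ) (a : Fin n → Euc d) (b : Fin n → ℝ),
    (∀ i, a i ≠ 0) ∧ P = {x | ∀ i, ⟪a i, x⟫ ≤ b i}

/-- A generalized polyhedron: a finite union of convex polyhedra. -/
def IsGenPolyhedron {d : ℕ} (P : Set (Euc d)) : Prop :=
  ∃ (n : ℕ) (Q : Fin n → Set (Euc d)),
    (∀ i, IsConvexPolyhedron (Q i)) ∧ P = ⋃ i, Q i

/-- A line-cone: a generalized polyhedron invariant under translation by every
multiple of some nonzero vector `u`. -/
def IsLineCone {d : ℕ} (D : Set (Euc d)) : Prop :=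
  IsGenPolyhedron D ∧ ∃ u : Euc d, u ≠ 0 ∧ ∀ t : ℝ, (fun x => x + t • u) '' D = D

/-- The tangent cone of `P` at `v`: points `y = v + x` such that `v + ε • x ∈ P`
for all sufficiently small `ε > 0`. -/
def tcone {d : ℕ} (P : Set (Euc d)) (v : Euc d) : Set (Euc d) :=
  {y | ∃ ε₀ > (0 : ℝ), ∀ ε : ℝ, 0 < ε → ε ≤ ε₀ → v + ε • (y - v) ∈ P}

/-- The real-valued indicator function of a set. -/
def ind {d : ℕ} (S : Set (Euc d)) : Euc d → ℝ := S.indicator fun _ => 1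

/-- `f` agrees Lebesgue-almost everywhere with a finite real linear combination of
indicator functions of line-cones. -/
def IsLinCombOfLineCones {d : ℕ} (f : Euc d → ℝ) : Prop :=
  ∃ (k : ℕ) (α : Fin k → ℝ) (D : Fin k → Set (Euc d)),
    (∀ i, IsLineCone (D i)) ∧ f =ᵐ[volume] fun x => ∑ i, α i * ind (D i) x

/-- `v` is an algebraic vertex of `P`: `v ∈ P` and the indicator function of the
tangent cone of `P` at `v` is not a.e. equal to a finite real linear combination of
indicator functions of line-cones. -/
def IsAlgebraicVertex {d : ℕ} (P : Set (Euc d)) (v : Euc d) : Prop :=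
  v ∈ P ∧ ¬ IsLinCombOfLineCones (ind (tcone P v))

/-- A line-cone contained in the hyperplane `h` with normal `n`: a finite union of
convex polyhedra contained in `h` that is invariant under translation by every multiple
of some nonzero vector `u` parallel to `h`. -/
def IsLineConeIn {d : ℕ} (h : Set (Euc d)) (n : Euc d) (D : Set (Euc d)) : Prop :=
  (∃ (m : ℕ) (Q : Fin m → Set (Euc d)),
      (∀ i, IsConvexPolyhedron (Q i) ∧ Q i ⊆ h) ∧ D = ⋃ i, Q i) ∧
  ∃ u : Euc d, u ≠ 0 ∧ ⟪n, u⟫ = 0 ∧ ∀ t : ℝ, (fun x => x + t • u) '' D = D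

open Set
open scoped ENNReal NNReal

section Ray

variable {V : Type*} [NormedAddCommGroup V] [NormedSpace ℝ V]

def raySet (S : Set V) (m : V) : Set V := {x | ∀ᶠ ε in 𝓝[>] (0 : ℝ), x + ε • m ∈ S}

lemma mem_raySet {S : Set V} {x m : V} :
    x ∈ raySet S m ↔ ∀ᶠ ε in 𝓝[>] (0 : ℝ), x + ε • m ∈ S := Iff.rfl

lemma Convex.eventually_nhdsGT_mem_or_notMem {I : Set ℝ} (hI : Convex ℝ I) :
    (∀ᶠ ε in 𝓝[>] (0 : ℝ), ε ∈ I) ∨ ∀ᶠ ε in 𝓝[>] (0 : ℝ), ε ∉ I := by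
  refine or_iff_not_imp_right.2 fun h => ?_
  simp only [not_eventually, not_not] at h
  obtain ⟨p, hpI, hp0⟩ := (h.and_eventually self_mem_nhdsWithin).exists
  filter_upwards [Ioo_mem_nhdsGT hp0] with ε ⟨hε0, hεp⟩
  obtain ⟨a, haI, ha0, haε⟩ := (h.and_eventually (Ioo_mem_nhdsGT hε0)).exists
  exact hI.ordConnected.out haI hpI ⟨haε.le, hεp.le⟩

lemma Convex.mem_raySet_or_eventually_notMem {Q : Set V} (hQ : Convex ℝ Q) (x m : V) :
    x ∈ raySet Q m ∨ ∀ᶠ ε in 𝓝[>] (0 : ℝ), x + ε • m ∉ Q := by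
  have hI : Convex ℝ {ε : ℝ | x + ε • m ∈ Q} := by
    intro ε₁ h₁ ε₂ h₂ a b ha hb hab
    convert hQ h₁ h₂ ha hb hab using 1
    simp only [mem_ofPred_eq, smul_eq_mul]
    congr! 1
    linear_combination (norm := module) (-hab) • x
  exact hI.eventually_nhdsGT_mem_or_notMem

lemma eventually_notMem_iUnion_of_notMem_raySet {ι : Type*} [Finite ι] {Q : ι → Set V}
    (hQ : ∀ i, Convex ℝ (Q i)) {x m : V} (hx : ∀ i, x ∉ raySet (Q i) m) :
    ∀ᶠ ε in 𝓝[>] (0 : ℝ), x + ε • m ∉ ⋃ i, Q i := by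
  filter_upwards [eventually_all.2 fun i =>
    ((hQ i).mem_raySet_or_eventually_notMem x m).resolve_left (hx i)] with ε hε
  simpa only [mem_iUnion, not_exists] using hε

lemma raySet_iUnion {ι : Type*} [Finite ι] {Q : ι → Set V} (hQ : ∀ i, Convex ℝ (Q i)) (m : V) :
    raySet (⋃ i, Q i) m = ⋃ i, raySet (Q i) m := by
  ext x
  simp only [mem_iUnion]
  refine ⟨fun hx => ?_, fun ⟨i, hi⟩ => (mem_raySet.1 hi).mono fun ε hε => mem_iUnion.2 ⟨i, hε⟩⟩
  by_contra! hout
  obtain ⟨ε, hin, hnot⟩ :=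
    ((mem_raySet.1 hx).and (eventually_notMem_iUnion_of_notMem_raySet hQ hout)).exists
  exact hnot hin

lemma eventually_mem_iUnion_iff_mem_raySet {ι : Type*} [Finite ι] {Q : ι → Set V}
    (hQ : ∀ i, Convex ℝ (Q i)) (x m : V) :
    ∀ᶠ ε in 𝓝[>] (0 : ℝ), (x + ε • m ∈ ⋃ i, Q i ↔ x ∈ raySet (⋃ i, Q i) m) := by
  by_cases hx : x ∈ raySet (⋃ i, Q i) m
  · filter_upwards [mem_raySet.1 hx] with ε hε
    exact iff_of_true hε hx
  · have hx' : ∀ i, x ∉ raySet (Q i) m := by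
      simpa only [raySet_iUnion hQ, mem_iUnion, not_exists] using hx
    filter_upwards [eventually_notMem_iUnion_of_notMem_raySet hQ hx'] with ε hε
    exact iff_of_false hε hx

lemma raySet_subset_of_isClosed {Q : Set V} (hQ : IsClosed Q) (m : V) : raySet Q m ⊆ Q := by
  intro x hx
  have hlim : Tendsto (fun ε : ℝ => x + ε • m) (𝓝[>] 0) (𝓝 x) :=
    tendsto_nhdsWithin_of_tendsto_nhds <|
      (continuous_const.add (continuous_id.smul continuous_const)).tendsto' 0 x (by simp)
  exact hQ.mem_of_tendsto hlim hx

lemma Convex.openSegment_subset_raySet {Q : Set V} (hQ : Convex ℝ Q) {x y m : V}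
    (hy : y ∈ raySet Q m) (hx : x ∈ Q) : openSegment ℝ y x ⊆ raySet Q m := by
  rintro _ ⟨a, b, ha, hb, hab, rfl⟩
  have hlim : Tendsto (fun ε : ℝ => a⁻¹ * ε) (𝓝[>] 0) (𝓝[>] 0) :=
    tendsto_nhdsWithin_iff.2
      ⟨tendsto_nhdsWithin_of_tendsto_nhds <| (continuous_const_mul _).tendsto' 0 0 (by simp),
        eventually_nhdsWithin_of_forall fun ε hε => mul_pos (inv_pos.2 ha) hε⟩
  filter_upwards [hlim.eventually hy] with ε hε
  have hsplit : a • y + b • x + ε • m = a • (y + (a⁻¹ * ε) • m) + b • x := by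
    rw [smul_add, smul_smul, mul_inv_cancel_left₀ ha.ne']
    abel
  rw [hsplit]
  exact hQ hε hx ha.le hb.le hab

lemma closure_inter_raySet {h Q : Set V} (hh : Convex ℝ h) (hhc : IsClosed h) (hQ : Convex ℝ Q)
    (hQc : IsClosed Q) {m : V} (hne : (h ∩ raySet Q m).Nonempty) :
    closure (h ∩ raySet Q m) = h ∩ Q := by
  obtain ⟨y, hyh, hyQ⟩ := hne
  refine (closure_minimal (inter_subset_inter_right h (raySet_subset_of_isClosed hQc m))
    (hhc.inter hQc)).antisymm ?_
  rintro x ⟨hxh, hxQ⟩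
  refine closure_mono ?_ (segment_subset_closure_openSegment (right_mem_segment ℝ y x))
  exact subset_inter (hh.openSegment_subset hyh hxh) (hQ.openSegment_subset_raySet hyQ hxQ)

lemma image_add_smul_eq_self_iff {S : Set V} {u : V} :
    (∀ t : ℝ, (fun x => x + t • u) '' S = S) ↔ ∀ (t : ℝ) (y : V), y + t • u ∈ S ↔ y ∈ S := by
  refine ⟨fun hS t y => ⟨fun hy => ?_, fun hy => hS t ▸ mem_image_of_mem _ hy⟩, fun hS t => ?_⟩
  · rw [← hS (-t)]
    exact ⟨y + t • u, hy, by module⟩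
  · ext y
    refine ⟨?_, fun hy => ⟨y + (-t) • u, (hS _ y).2 hy, by module⟩⟩
    rintro ⟨z, hz, rfl⟩
    exact (hS t z).2 hz

lemma raySet_add_smul {S : Set V} {u : V} (hS : ∀ t : ℝ, (fun x => x + t • u) '' S = S)
    (m : V) (t : ℝ) : raySet S (m + t • u) = raySet S m := by
  ext x
  rw [mem_raySet, mem_raySet]
  refine eventually_congr (Eventually.of_forall fun ε => ?_)
  rw [show x + ε • (m + t • u) = x + ε • m + (ε * t) • u by module,
    image_add_smul_eq_self_iff.1 hS]

lemma image_add_smul_raySet {S : Set V} {u : V} (hS : ∀ t : ℝ, (fun x => x + t • u) '' S = S)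
    (m : V) (t : ℝ) : (fun x => x + t • u) '' raySet S m = raySet S m := by
  refine image_add_smul_eq_self_iff.2 (fun t y => ?_) t
  rw [mem_raySet, mem_raySet]
  refine eventually_congr (Eventually.of_forall fun ε => ?_)
  rw [show y + t • u + ε • m = y + ε • m + t • u by abel, image_add_smul_eq_self_iff.1 hS]

lemma image_add_smul_closure {T : Set V} {u : V} (hT : ∀ t : ℝ, (fun x => x + t • u) '' T = T)
    (t : ℝ) : (fun x => x + t • u) '' closure T = closure T := by
  simpa [hT t] using (Homeomorph.addRight (t • u)).image_closure T

end Ray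

lemma tendsto_add_mul_nhdsGT (c s : ℝ) :
    Tendsto (fun ε : ℝ => c + ε * s) (𝓝[>] 0) (𝓝 c) :=
  tendsto_nhdsWithin_of_tendsto_nhds <|
    (continuous_const.add (continuous_id.mul continuous_const)).tendsto' 0 c (by simp)

lemma eventually_nhdsGT_add_mul_le_iff (c s b : ℝ) :
    (∀ᶠ ε in 𝓝[>] (0 : ℝ), c + ε * s ≤ b) ↔ c < b ∨ c = b ∧ s ≤ 0 := by
  refine ⟨fun h => ?_, ?_⟩
  · rcases lt_trichotomy c b with hlt | rfl | hgt
    · exact Or.inl hlt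
    · obtain ⟨ε, hε, hε0 : 0 < ε⟩ := (h.and self_mem_nhdsWithin).exists
      exact Or.inr ⟨rfl, nonpos_of_mul_nonpos_right (by linarith) hε0⟩
    · obtain ⟨ε, hle, hgt'⟩ :=
        (h.and ((tendsto_add_mul_nhdsGT c s).eventually_const_lt hgt)).exists
      exact absurd hle hgt'.not_ge
  · rintro (hlt | ⟨rfl, hs⟩)
    · exact ((tendsto_add_mul_nhdsGT c s).eventually_lt_const hlt).mono fun _ => le_of_lt
    · filter_upwards [self_mem_nhdsWithin] with ε (hε : 0 < ε)
      nlinarith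

section Halfspaces

variable {V : Type*} [NormedAddCommGroup V] [InnerProductSpace ℝ V]

lemma mem_raySet_setOf_forall_inner_le_iff {ι : Type*} [Finite ι] (a : ι → V) (b : ι → ℝ)
    (x m : V) :
    x ∈ raySet {z | ∀ i, ⟪a i, z⟫ ≤ b i} m ↔
      ∀ i, ⟪a i, x⟫ < b i ∨ ⟪a i, x⟫ = b i ∧ ⟪a i, m⟫ ≤ 0 := by
  simp only [mem_raySet, mem_ofPred_eq, eventually_all, inner_add_right, real_inner_smul_right,
    eventually_nhdsGT_add_mul_le_iff]

lemma isClosed_setOf_forall_inner_le {ι : Type*} [Finite ι] (a : ι → V) (b : ι → ℝ) :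
    IsClosed {x | ∀ i, ⟪a i, x⟫ ≤ b i} := by
  simpa only [ofPred_forall] using
    isClosed_iInter fun i => isClosed_le (continuous_const.inner continuous_id) continuous_const

lemma frontier_setOf_forall_inner_le_subset {ι : Type*} [Finite ι] (a : ι → V) (b : ι → ℝ) :
    frontier {x | ∀ i, ⟪a i, x⟫ ≤ b i} ⊆ ⋃ i, {x | ⟪a i, x⟫ = b i} := by
  rw [(isClosed_setOf_forall_inner_le a b).frontier_eq]
  rintro x ⟨hxQ, hxi⟩
  by_contra hne
  simp only [mem_iUnion, not_exists] at hne
  have hopen : IsOpen {x | ∀ i, ⟪a i, x⟫ < b i} := by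
    simpa only [ofPred_forall] using
      isOpen_iInter_of_finite fun i => isOpen_lt (continuous_const.inner continuous_id)
        continuous_const
  exact hxi (interior_maximal (fun y hy i => (hy i).le) hopen fun i => (hxQ i).lt_of_ne (hne i))

lemma inner_ne_zero_of_hyperplane_subset {a n x m : V} {b q : ℝ} (ha : a ≠ 0) (hx : ⟪n, x⟫ = q)
    (hsub : {y | ⟪n, y⟫ = q} ⊆ {y | ⟪a, y⟫ = b}) (hnm : ⟪n, m⟫ ≠ 0) : ⟪a, m⟫ ≠ 0 := by
  intro ham
  -- `x + w` stays on the hyperplane, which forces `⟪a, w⟫ = ⟪a, a⟫` to vanish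
  set w := a - (⟪n, a⟫ / ⟪n, m⟫) • m
  have hw : ⟪n, x + w⟫ = q := by
    simp only [w, inner_add_right, inner_sub_right, real_inner_smul_right, hx]
    field_simp
    ring
  have h1 : ⟪a, x⟫ = b := hsub hx
  have h2 : ⟪a, x + w⟫ = b := hsub hw
  simp only [w, inner_add_right, inner_sub_right, real_inner_smul_right, ham, h1, mul_zero,
    sub_zero] at h2
  have haa : ⟪a, a⟫ = 0 := by linarith
  exact ha (inner_self_eq_zero.1 haa)

lemma inner_eq_zero_of_hyperplane_subset {a n x m : V} {b q : ℝ} (hx : ⟪n, x⟫ = q)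
    (hnm : ⟪n, m⟫ = 0) (hsub : {y | ⟪n, y⟫ = q} ⊆ {y | ⟪a, y⟫ = b}) : ⟪a, m⟫ = 0 := by
  have h1 : ⟪a, x⟫ = b := hsub hx
  have h2 : ⟪a, x + m⟫ = b := hsub (show ⟪n, x + m⟫ = q by rw [inner_add_right, hx, hnm, add_zero])
  rw [inner_add_right, h1] at h2
  linarith

lemma mem_raySet_iff_of_generic {ι : Type*} [Finite ι] {a : ι → V} {b : ι → ℝ} {n x m : V}
    {q : ℝ} (hx : ⟪n, x⟫ = q)
    (hgen : ∀ i, ⟪a i, x⟫ = b i → {y | ⟪n, y⟫ = q} ⊆ {y | ⟪a i, y⟫ = b i}) :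
    x ∈ raySet {z | ∀ i, ⟪a i, z⟫ ≤ b i} m ↔
      (∀ i, ⟪a i, x⟫ ≤ b i) ∧ ∀ i, {y | ⟪n, y⟫ = q} ⊆ {y | ⟪a i, y⟫ = b i} → ⟪a i, m⟫ ≤ 0 := by
  rw [mem_raySet_setOf_forall_inner_le_iff, ← forall_and]
  refine forall_congr' fun i => ?_
  rw [← show ⟪a i, x⟫ = b i ↔ _ from ⟨hgen i, fun h => h hx⟩]
  constructor
  · rintro (h | ⟨h, hm⟩)
    · exact ⟨h.le, fun h' => absurd h' h.ne⟩
    · exact ⟨h.le, fun _ => hm⟩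
  · rintro ⟨h, hm⟩
    exact h.lt_or_eq.imp_right fun h => ⟨h, hm h⟩

lemma isClosed_hyperplane (n : V) (q : ℝ) : IsClosed {x : V | ⟪n, x⟫ = q} :=
  isClosed_eq (continuous_const.inner continuous_id) continuous_const

lemma eventually_add_smul_notMem_hyperplanes {A : Finset (V × ℝ)} (hA : ∀ p ∈ A, p.1 ≠ 0)
    {n x m : V} {q : ℝ} (hx : ⟪n, x⟫ = q) (hnm : ⟪n, m⟫ ≠ 0)
    (hgen : ∀ p ∈ A, ⟪p.1, x⟫ = p.2 → {y | ⟪n, y⟫ = q} ⊆ {y | ⟪p.1, y⟫ = p.2}) :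
    ∀ᶠ ε in 𝓝[>] (0 : ℝ), x + ε • m ∉ ⋃ p ∈ A, {y | ⟪p.1, y⟫ = p.2} := by
  simp only [mem_iUnion, not_exists, mem_ofPred_eq, inner_add_right, real_inner_smul_right]
  refine (eventually_all_finset A).2 fun p hp => ?_
  by_cases hpx : ⟪p.1, x⟫ = p.2
  · have hpm := inner_ne_zero_of_hyperplane_subset (hA p hp) hx (hgen p hp hpx) hnm
    filter_upwards [self_mem_nhdsWithin] with ε (hε : 0 < ε)
    simp [hpx, hε.ne', hpm]
  · exact (tendsto_add_mul_nhdsGT _ _).eventually_ne hpx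

end Halfspaces

lemma frontier_iUnion_subset_of_finite {X : Type*} [TopologicalSpace X] {ι : Type*} [Finite ι]
    (s : ι → Set X) : frontier (⋃ i, s i) ⊆ ⋃ i, frontier (s i) := by
  rintro x ⟨hcl, hint⟩
  rw [closure_iUnion_of_finite, mem_iUnion] at hcl
  obtain ⟨i, hi⟩ := hcl
  exact mem_iUnion.2 ⟨i, hi, fun h => hint (interior_mono (subset_iUnion s i) h)⟩

section Polyhedra

variable {d : ℕ}

lemma isConvexPolyhedron_setOf_forall {ι : Type*} [Fintype ι] (a : ι → Euc d) (b : ι → ℝ)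
    (ha : ∀ i, a i ≠ 0) : IsConvexPolyhedron {x | ∀ i, ⟪a i, x⟫ ≤ b i} := by
  let e := Fintype.equivFin ι
  refine ⟨Fintype.card ι, a ∘ e.symm, b ∘ e.symm, fun i => ha _, ?_⟩
  ext x
  exact e.symm.forall_congr_right.symm

lemma isGenPolyhedron_iUnion {ι : Type*} [Fintype ι] {Q : ι → Set (Euc d)}
    (hQ : ∀ i, IsConvexPolyhedron (Q i)) : IsGenPolyhedron (⋃ i, Q i) :=
  ⟨Fintype.card ι, Q ∘ (Fintype.equivFin ι).symm, fun _ => hQ _,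
    ((Fintype.equivFin ι).symm.surjective.iUnion_comp Q).symm⟩

lemma IsConvexPolyhedron.convex {Q : Set (Euc d)} (hQ : IsConvexPolyhedron Q) : Convex ℝ Q := by
  obtain ⟨k, a, b, -, rfl⟩ := hQ
  simpa only [ofPred_forall] using
    convex_iInter fun i => convex_halfSpace_le (f := fun x => ⟪a i, x⟫)
      ⟨fun x y => inner_add_right _ x y, fun c x => real_inner_smul_right _ x c⟩ (b i)

lemma IsConvexPolyhedron.isClosed {Q : Set (Euc d)} (hQ : IsConvexPolyhedron Q) : IsClosed Q := by
  obtain ⟨k, a, b, -, rfl⟩ := hQ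
  exact isClosed_setOf_forall_inner_le a b

lemma IsConvexPolyhedron.inter {P Q : Set (Euc d)} (hP : IsConvexPolyhedron P)
    (hQ : IsConvexPolyhedron Q) : IsConvexPolyhedron (P ∩ Q) := by
  obtain ⟨k, a, b, ha, rfl⟩ := hP
  obtain ⟨l, a', b', ha', rfl⟩ := hQ
  convert isConvexPolyhedron_setOf_forall (Sum.elim a a') (Sum.elim b b')
    (by rintro (i | i) <;> simp [ha, ha']) using 1
  ext x
  simp [Sum.forall]

lemma isConvexPolyhedron_hyperplane {n : Euc d} (hn : n ≠ 0) (q : ℝ) :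
    IsConvexPolyhedron {x : Euc d | ⟪n, x⟫ = q} := by
  refine ⟨2, ![n, -n], ![q, -q], fun i => by fin_cases i <;> simpa, ?_⟩
  ext x
  simp only [mem_ofPred_eq, Fin.forall_fin_two, Matrix.cons_val_zero, Matrix.cons_val_one,
    inner_neg_left, neg_le_neg_iff]
  exact le_antisymm_iff

lemma mem_tcone_iff {P : Set (Euc d)} {v y : Euc d} : y ∈ tcone P v ↔ v ∈ raySet P (y - v) := by
  rw [mem_raySet, (nhdsGT_basis (0 : ℝ)).eventually_iff]
  constructor
  · rintro ⟨ε₀, hε₀, h⟩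
    exact ⟨ε₀, hε₀, fun ε hε => h ε hε.1 hε.2.le⟩
  · rintro ⟨δ, hδ, h⟩
    exact ⟨δ / 2, by positivity, fun ε hε0 hε => h ⟨hε0, by linarith⟩⟩

lemma tcone_setOf_forall_inner_le {ι : Type*} [Finite ι] (a : ι → Euc d) (b : ι → ℝ) {v : Euc d}
    (hv : ∀ i, ⟪a i, v⟫ ≤ b i) :
    tcone {x | ∀ i, ⟪a i, x⟫ ≤ b i} v =
      {y | ∀ i : {i // ⟪a i, v⟫ = b i}, ⟪a i, y⟫ ≤ ⟪a i, v⟫} := by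
  ext y
  simp only [mem_tcone_iff, mem_raySet_setOf_forall_inner_le_iff, inner_sub_right, sub_nonpos,
    mem_ofPred_eq, Subtype.forall]
  refine forall_congr' fun i => ?_
  rcases (hv i).lt_or_eq with hlt | heq
  · simp [hlt, hlt.ne]
  · simp [heq]

lemma IsConvexPolyhedron.tcone {Q : Set (Euc d)} (hQ : IsConvexPolyhedron Q) {v : Euc d}
    (hv : v ∈ Q) : IsConvexPolyhedron (tcone Q v) := by
  obtain ⟨k, a, b, ha, rfl⟩ := hQ
  rw [tcone_setOf_forall_inner_le a b hv]
  exact isConvexPolyhedron_setOf_forall _ _ fun i => ha i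

lemma mem_of_mem_tcone {Q : Set (Euc d)} (hQ : IsClosed Q) {v y : Euc d} (hy : y ∈ tcone Q v) :
    v ∈ Q :=
  raySet_subset_of_isClosed hQ _ (mem_tcone_iff.1 hy)

lemma tcone_iUnion {ι : Type*} [Finite ι] {Q : ι → Set (Euc d)} (hQ : ∀ i, Convex ℝ (Q i))
    (v : Euc d) : tcone (⋃ i, Q i) v = ⋃ i, tcone (Q i) v := by
  ext y
  simp only [mem_tcone_iff, raySet_iUnion hQ, mem_iUnion]

lemma IsGenPolyhedron.tcone {P : Set (Euc d)} (hP : IsGenPolyhedron P) (v : Euc d) :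
    IsGenPolyhedron (tcone P v) := by
  classical
  obtain ⟨k, Q, hQ, rfl⟩ := hP
  have hsub : _root_.tcone (⋃ i, Q i) v = ⋃ i : {i // v ∈ Q i}, _root_.tcone (Q i) v := by
    rw [tcone_iUnion fun i => (hQ i).convex]
    ext y
    simp only [mem_iUnion, Subtype.exists]
    exact ⟨fun ⟨i, hi⟩ => ⟨i, mem_of_mem_tcone (hQ i).isClosed hi, hi⟩,
      fun ⟨i, _, hi⟩ => ⟨i, hi⟩⟩
  rw [hsub]
  exact isGenPolyhedron_iUnion fun i => (hQ i).tcone i.2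

lemma IsGenPolyhedron.exists_frontier_subset {S : Set (Euc d)} (hS : IsGenPolyhedron S) :
    ∃ A : Finset (Euc d × ℝ), (∀ p ∈ A, p.1 ≠ 0) ∧
      frontier S ⊆ ⋃ p ∈ A, {x | ⟪p.1, x⟫ = p.2} := by
  classical
  obtain ⟨k, Q, hQ, rfl⟩ := hS
  choose kk a b ha hrep using hQ
  refine ⟨Finset.univ.biUnion fun j => Finset.univ.image fun l => (a j l, b j l), ?_, ?_⟩
  · simp only [Finset.mem_biUnion, Finset.mem_image, Finset.mem_univ, true_and]
    rintro _ ⟨j, l, rfl⟩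
    exact ha j l
  · refine (frontier_iUnion_subset_of_finite Q).trans (iUnion_subset fun j => ?_)
    rw [hrep j]
    refine (frontier_setOf_forall_inner_le_subset (a j) (b j)).trans (iUnion_subset fun l => ?_)
    intro x hx
    simp only [mem_iUnion]
    exact ⟨(a j l, b j l), by simpa using ⟨j, l, rfl, rfl⟩, hx⟩

lemma IsGenPolyhedron.eventually_ind_add_smul {S : Set (Euc d)} (hS : IsGenPolyhedron S)
    (x m : Euc d) : ∀ᶠ ε in 𝓝[>] (0 : ℝ), ind S (x + ε • m) = ind (raySet S m) x := by
  obtain ⟨k, Q, hQ, rfl⟩ := hS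
  filter_upwards [eventually_mem_iUnion_iff_mem_raySet (fun i => (hQ i).convex) x m] with ε hε
  exact indicator_const_eq_indicator_const hε

lemma IsGenPolyhedron.tendsto_ind_add_smul {S : Set (Euc d)} (hS : IsGenPolyhedron S)
    (x m : Euc d) :
    Tendsto (fun ε : ℝ => ind S (x + ε • m)) (𝓝[>] 0) (𝓝 (ind (raySet S m) x)) :=
  tendsto_const_nhds.congr' ((hS.eventually_ind_add_smul x m).mono fun _ h => h.symm)

lemma continuousOn_ind_compl_frontier (S : Set (Euc d)) : ContinuousOn (ind S) (frontier S)ᶜ := by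
  classical
  rw [ind, ← piecewise_eq_indicator]
  exact ContinuousOn.piecewise (fun x hx => absurd hx.2 hx.1) continuousOn_const continuousOn_const

end Polyhedra

section Hyperplane

variable {d : ℕ}

abbrev hyperplaneMeasure (n : Euc d) (q : ℝ) : Measure (Euc d) :=
  (μH[(d : ℝ) - 1] : Measure (Euc d)).restrict {x | ⟪n, x⟫ = q}

lemma measurableSet_hyperplane (n : Euc d) (q : ℝ) : MeasurableSet {x : Euc d | ⟪n, x⟫ = q} :=
  (isClosed_hyperplane n q).measurableSet

/-- The section is contained in an affine subspace of dimension `d - 2`. -/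
lemma hausdorffMeasure_inter_eq_zero_of_linearIndependent {a n : Euc d}
    (hli : LinearIndependent ℝ ![a, n]) (b q : ℝ) :
    μH[(d : ℝ) - 1] ({x : Euc d | ⟪a, x⟫ = b} ∩ {x | ⟪n, x⟫ = q}) = 0 := by
  rcases eq_empty_or_nonempty ({x : Euc d | ⟪a, x⟫ = b} ∩ {x | ⟪n, x⟫ = q}) with
    hW | ⟨x₀, hx₀a, hx₀n⟩
  · rw [hW, measure_empty]
  have hK := (Submodule.span ℝ (range ![a, n])).finrank_add_finrank_orthogonal
  rw [finrank_span_eq_card hli, finrank_euclideanSpace_fin, Fintype.card_fin] at hK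
  set K := (Submodule.span ℝ (range ![a, n]))ᗮ
  have hsub : {x : Euc d | ⟪a, x⟫ = b} ∩ {x | ⟪n, x⟫ = q} ⊆ range fun y : K => x₀ + y := by
    rintro x ⟨hxa : ⟪a, x⟫ = b, hxn : ⟪n, x⟫ = q⟩
    refine ⟨⟨x - x₀, (Submodule.mem_orthogonal _ _).2 fun u hu => ?_⟩, add_sub_cancel x₀ x⟩
    induction hu using Submodule.span_induction with
    | mem u hu =>
      obtain ⟨i, rfl⟩ := hu
      fin_cases i
      · simp [inner_sub_right, hxa, hx₀a.out]
      · simp [inner_sub_right, hxn, hx₀n.out]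
    | zero => simp
    | add u w _ _ hu hw => rw [inner_add_left, hu, hw, add_zero]
    | smul c u _ hu => rw [real_inner_smul_left, hu, mul_zero]
  have hdim : dimH (range fun y : K => x₀ + y) < ((d - 1 : ℕ) : ℝ≥0) := by
    have hlt : (Module.finrank ℝ K : ℝ≥0∞) < ((d - 1 : ℕ) : ℝ≥0) := by
      exact_mod_cast (by omega : Module.finrank ℝ K < d - 1)
    exact (ContDiff.dimH_range_le (contDiff_const.add K.subtypeL.contDiff)).trans_lt hlt
  have hd : (d : ℝ) - 1 = ((d - 1 : ℕ) : ℝ≥0) := by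
    rw [NNReal.coe_natCast, Nat.cast_sub (by omega : 1 ≤ d), Nat.cast_one]
  rw [hd]
  exact measure_mono_null hsub (hausdorffMeasure_of_dimH_lt hdim)

lemma hausdorffMeasure_inter_hyperplane_eq_zero {a n : Euc d} {b q : ℝ} (hn : n ≠ 0)
    (hsub : ¬ {x : Euc d | ⟪n, x⟫ = q} ⊆ {x | ⟪a, x⟫ = b}) :
    μH[(d : ℝ) - 1] ({x : Euc d | ⟪a, x⟫ = b} ∩ {x | ⟪n, x⟫ = q}) = 0 := by
  by_cases hli : LinearIndependent ℝ ![a, n]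
  · exact hausdorffMeasure_inter_eq_zero_of_linearIndependent hli b q
  obtain ⟨c, rfl⟩ : ∃ c : ℝ, c • n = a := by
    simpa [linearIndependent_fin2, hn] using hli
  convert measure_empty (μ := (μH[(d : ℝ) - 1] : Measure (Euc d)))
  refine eq_empty_of_forall_notMem fun x₀ ⟨hx₀a, hx₀n⟩ => hsub fun y hy => ?_
  simp only [mem_ofPred_eq, real_inner_smul_left] at hx₀a hx₀n hy ⊢
  rw [hy, ← hx₀n, hx₀a]

lemma ae_hyperplaneMeasure_inner_eq_imp_subset {n : Euc d} (hn : n ≠ 0) (q : ℝ) (a : Euc d)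
    (b : ℝ) :
    ∀ᵐ x ∂hyperplaneMeasure n q, ⟪a, x⟫ = b → {y : Euc d | ⟪n, y⟫ = q} ⊆ {y | ⟪a, y⟫ = b} := by
  by_cases hsub : {y : Euc d | ⟪n, y⟫ = q} ⊆ {y | ⟪a, y⟫ = b}
  · exact Eventually.of_forall fun _ _ => hsub
  rw [ae_iff, Measure.restrict_apply' (measurableSet_hyperplane n q)]
  refine measure_mono_null ?_ (hausdorffMeasure_inter_hyperplane_eq_zero hn hsub)
  rintro x ⟨hx, hxn⟩
  exact ⟨(Classical.not_imp.1 hx).1, hxn⟩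

lemma ae_hyperplaneMeasure_generic {ι : Type*} [Countable ι] {n : Euc d} (hn : n ≠ 0) (q : ℝ)
    (a : ι → Euc d) (b : ι → ℝ) :
    ∀ᵐ x ∂hyperplaneMeasure n q, ⟪n, x⟫ = q ∧
      ∀ i, ⟪a i, x⟫ = b i → {y : Euc d | ⟪n, y⟫ = q} ⊆ {y | ⟪a i, y⟫ = b i} :=
  (ae_restrict_mem (measurableSet_hyperplane n q)).and
    (ae_all_iff.2 fun i => ae_hyperplaneMeasure_inner_eq_imp_subset hn q (a i) (b i))

end Hyperplane

section LineCones

variable {d : ℕ}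

lemma IsConvexPolyhedron.ae_mem_raySet_iff {Q : Set (Euc d)} (hQ : IsConvexPolyhedron Q)
    {n : Euc d} (hn : n ≠ 0) (q : ℝ) (m : Euc d) :
    ∀ᵐ x ∂hyperplaneMeasure n q,
      x ∈ raySet Q m ↔ x ∈ Q ∧ ({y | ⟪n, y⟫ = q} ∩ raySet Q m).Nonempty := by
  obtain ⟨k, a, b, -, rfl⟩ := hQ
  filter_upwards [ae_hyperplaneMeasure_generic hn q a b] with x ⟨hx, hgen⟩
  rw [mem_raySet_iff_of_generic hx hgen]
  refine ⟨fun h => ⟨h.1, x, hx, (mem_raySet_iff_of_generic hx hgen).2 h⟩, ?_⟩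
  rintro ⟨hxQ, y, hy, hyQ⟩
  refine ⟨hxQ, fun i hi => ?_⟩
  rcases (mem_raySet_setOf_forall_inner_le_iff a b y m).1 hyQ i with h | h
  · exact absurd (hi hy) h.ne
  · exact h.2

lemma IsGenPolyhedron.ae_mem_raySet_iff_of_inner_eq_zero {S : Set (Euc d)}
    (hS : IsGenPolyhedron S) {n m : Euc d} (hn : n ≠ 0) (q : ℝ) (hnm : ⟪n, m⟫ = 0) :
    ∀ᵐ x ∂hyperplaneMeasure n q, x ∈ raySet S m ↔ x ∈ S := by
  obtain ⟨k, Q, hQ, rfl⟩ := hS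
  have hpiece : ∀ i, ∀ᵐ x ∂hyperplaneMeasure n q, x ∈ raySet (Q i) m ↔ x ∈ Q i := by
    intro i
    obtain ⟨l, a, b, -, hQi⟩ := hQ i
    rw [hQi]
    filter_upwards [ae_hyperplaneMeasure_generic hn q a b] with x ⟨hx, hgen⟩
    rw [mem_raySet_iff_of_generic hx hgen, and_iff_left_iff_imp]
    exact fun _ i hi => (inner_eq_zero_of_hyperplane_subset hx hnm hi).le
  filter_upwards [ae_all_iff.2 hpiece] with x hx
  simp only [raySet_iUnion fun i => (hQ i).convex, mem_iUnion, hx]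

/-- Shifting along `u` turns the normal `n` into a vector parallel to the hyperplane. -/
lemma IsGenPolyhedron.ae_mem_raySet_iff_mem_raySet_neg {S : Set (Euc d)}
    (hS : IsGenPolyhedron S) {u : Euc d} (hinv : ∀ t : ℝ, (fun x => x + t • u) '' S = S)
    {n : Euc d} (hnu : ⟪n, u⟫ ≠ 0) (q : ℝ) :
    ∀ᵐ x ∂hyperplaneMeasure n q, x ∈ raySet S n ↔ x ∈ raySet S (-n) := by
  have hn : n ≠ 0 := by
    rintro rfl
    simp at hnu
  set t := ⟪n, n⟫ / ⟪n, u⟫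
  set w := n - t • u
  have hw : ⟪n, w⟫ = 0 := by
    simp only [w, t, inner_sub_right, real_inner_smul_right, div_mul_cancel₀ _ hnu, sub_self]
  have hpos : n = w + t • u := (sub_add_cancel n _).symm
  have hneg : -n = -w + (-t) • u := by
    simp only [w]
    module
  filter_upwards [hS.ae_mem_raySet_iff_of_inner_eq_zero hn q hw,
    hS.ae_mem_raySet_iff_of_inner_eq_zero hn q (by rw [inner_neg_right, hw, neg_zero])]
    with x hxw hxw'
  rw [hneg, raySet_add_smul hinv, hpos, raySet_add_smul hinv, hxw, hxw']

/-- The one-sided section is a.e. its own closure, a finite union of convex polyhedra in the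
hyperplane that is still invariant under `u`. -/
lemma IsGenPolyhedron.exists_isLineConeIn_ae_eq {S : Set (Euc d)} (hS : IsGenPolyhedron S)
    {u : Euc d} (hu : u ≠ 0) (hinv : ∀ t : ℝ, (fun x => x + t • u) '' S = S) {n : Euc d}
    (hn : n ≠ 0) (hnu : ⟪n, u⟫ = 0) (q : ℝ) (m : Euc d) :
    ∃ D, IsLineConeIn {x | ⟪n, x⟫ = q} n D ∧ ind (raySet S m) =ᵐ[hyperplaneMeasure n q] ind D := by
  classical
  obtain ⟨k, Q, hQ, rfl⟩ := hS
  set h := {x : Euc d | ⟪n, x⟫ = q}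
  have hh : Convex ℝ h := convex_hyperplane
    ⟨fun x y => inner_add_right _ x y, fun c x => real_inner_smul_right _ x c⟩ q
  let J := {j // (h ∩ raySet (Q j) m).Nonempty}
  set D := ⋃ j : J, h ∩ Q j
  have hD : closure (h ∩ raySet (⋃ j, Q j) m) = D := by
    rw [raySet_iUnion fun j => (hQ j).convex, inter_iUnion, closure_iUnion_of_finite]
    ext x
    simp only [D, mem_iUnion]
    refine ⟨fun ⟨j, hj⟩ => ?_, fun ⟨j, hj⟩ => ⟨j, ?_⟩⟩
    · have hne : (h ∩ raySet (Q j) m).Nonempty :=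
        nonempty_iff_ne_empty.2 fun he => by simp [he] at hj
      exact ⟨⟨j, hne⟩, by rwa [closure_inter_raySet hh (isClosed_hyperplane n q)
        (hQ j).convex (hQ j).isClosed hne] at hj⟩
    · rwa [closure_inter_raySet hh (isClosed_hyperplane n q) (hQ j.1).convex (hQ j.1).isClosed j.2]
  have hhinv : ∀ t : ℝ, (fun x => x + t • u) '' h = h := image_add_smul_eq_self_iff.2
    fun t y => by simp [h, inner_add_right, real_inner_smul_right, hnu]
  refine ⟨D, ⟨⟨Fintype.card J, fun i => h ∩ Q ((Fintype.equivFin J).symm i),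
    fun i => ⟨(isConvexPolyhedron_hyperplane hn q).inter (hQ _), inter_subset_left⟩,
    ((Fintype.equivFin J).symm.surjective.iUnion_comp fun j : J => h ∩ Q j).symm⟩,
    u, hu, hnu, fun t => hD ▸ image_add_smul_closure (fun t => ?_) t⟩, ?_⟩
  · rw [image_inter (add_left_injective _), hhinv, image_add_smul_raySet hinv]
  · refine indicator_ae_eq_of_ae_eq_set (eventuallyEq_set.2 ?_)
    filter_upwards [ae_restrict_mem (measurableSet_hyperplane n q),
      ae_all_iff.2 fun j => (hQ j).ae_mem_raySet_iff hn q m] with x hxh hx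
    simp only [raySet_iUnion fun j => (hQ j).convex, mem_iUnion, hx, D, mem_inter_iff,
      Subtype.exists, J]
    exact exists_congr fun j => ⟨fun ⟨hxQ, hne⟩ => ⟨hne, hxh, hxQ⟩, fun ⟨hne, _, hxQ⟩ => ⟨hxQ, hne⟩⟩

def lineConeSpan (h : Set (Euc d)) (n : Euc d) : Submodule ℝ (Euc d → ℝ) :=
  Submodule.span ℝ (ind '' {D | IsLineConeIn h n D})

lemma exists_eq_sum_of_mem_lineConeSpan {h : Set (Euc d)} {n : Euc d} {g : Euc d → ℝ}
    (hg : g ∈ lineConeSpan h n) :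
    ∃ (k : ℕ) (β : Fin k → ℝ) (D : Fin k → Set (Euc d)),
      (∀ i, IsLineConeIn h n (D i)) ∧ ∀ x, g x = ∑ i, β i * ind (D i) x := by
  obtain ⟨k, β, f, rfl⟩ := Submodule.mem_span_set'.1 hg
  choose D hD hDf using fun i => (f i).2
  refine ⟨k, β, D, hD, fun x => ?_⟩
  simp [Finset.sum_apply, hDf]

lemma IsLineCone.exists_mem_lineConeSpan_ae_eq {E : Set (Euc d)} (hE : IsLineCone E)
    {n : Euc d} (hn : n ≠ 0) (q : ℝ) :
    ∃ g ∈ lineConeSpan {x | ⟪n, x⟫ = q} n,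
      (fun x => ind (raySet E n) x - ind (raySet E (-n)) x) =ᵐ[hyperplaneMeasure n q] g := by
  obtain ⟨hS, u, hu, hinv⟩ := hE
  by_cases hnu : ⟪n, u⟫ = 0
  · obtain ⟨D₁, hD₁, h₁⟩ := hS.exists_isLineConeIn_ae_eq hu hinv hn hnu q n
    obtain ⟨D₂, hD₂, h₂⟩ := hS.exists_isLineConeIn_ae_eq hu hinv hn hnu q (-n)
    exact ⟨ind D₁ - ind D₂, sub_mem (Submodule.subset_span ⟨D₁, hD₁, rfl⟩)
      (Submodule.subset_span ⟨D₂, hD₂, rfl⟩), h₁.sub h₂⟩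
  · refine ⟨0, zero_mem _, ?_⟩
    filter_upwards [hS.ae_mem_raySet_iff_mem_raySet_neg hinv hnu q] with x hx
    rw [Pi.zero_apply, sub_eq_zero]
    exact indicator_const_eq_indicator_const hx

end LineCones

/-- Both sides of `hCE` are locally constant off finitely many facet hyperplanes, hence agree
there; from a.e. point of the hyperplane, the ray in direction `m` eventually avoids them. -/
lemma ae_ind_raySet_eq_sum {d k : ℕ} {C : Set (Euc d)} {α : Fin k → ℝ} {E : Fin k → Set (Euc d)}
    (hC : IsGenPolyhedron C) (hE : ∀ i, IsGenPolyhedron (E i))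
    (hCE : ind C =ᵐ[volume] fun x => ∑ i, α i * ind (E i) x) {n m : Euc d} (hnm : ⟪n, m⟫ ≠ 0)
    (q : ℝ) :
    ∀ᵐ x ∂hyperplaneMeasure n q, ind (raySet C m) x = ∑ i, α i * ind (raySet (E i) m) x := by
  classical
  have hn : n ≠ 0 := by
    rintro rfl
    simp at hnm
  obtain ⟨A₀, hA₀, hC'⟩ := hC.exists_frontier_subset
  choose A hA hE' using fun i => (hE i).exists_frontier_subset
  set B := A₀ ∪ Finset.univ.biUnion A
  have hB : ∀ p ∈ B, p.1 ≠ 0 := by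
    simp only [B, Finset.mem_union, Finset.mem_biUnion, Finset.mem_univ, true_and]
    rintro p (hp | ⟨i, hp⟩)
    exacts [hA₀ p hp, hA i p hp]
  set U := (⋃ p ∈ B, {y : Euc d | ⟪p.1, y⟫ = p.2})ᶜ
  have hU : IsOpen U :=
    (isClosed_biUnion_finset fun p _ => isClosed_hyperplane p.1 p.2).isOpen_compl
  have hfr : ∀ {S : Set (Euc d)} {A' : Finset (Euc d × ℝ)}, A' ⊆ B →
      frontier S ⊆ ⋃ p ∈ A', {x | ⟪p.1, x⟫ = p.2} → ContinuousOn (ind S) U :=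
    fun hAB hS => (continuousOn_ind_compl_frontier _).mono
      (compl_subset_compl.2 (hS.trans (biUnion_subset_biUnion_left hAB)))
  have hEq : EqOn (ind C) (fun x => ∑ i, α i * ind (E i) x) U :=
    Measure.eqOn_open_of_ae_eq (ae_restrict_of_ae hCE) hU (hfr Finset.subset_union_left hC')
      (continuousOn_finsetSum _ fun i _ => continuousOn_const.mul (hfr (Finset.subset_union_right.trans'
        (Finset.subset_biUnion_of_mem A (Finset.mem_univ i))) (hE' i)))
  filter_upwards [ae_restrict_mem (measurableSet_hyperplane n q),
    (eventually_all_finset B).2 fun p _ => ae_hyperplaneMeasure_inner_eq_imp_subset hn q p.1 p.2]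
    with x hx hgen
  obtain ⟨ε, hεU, hεC, hεE⟩ := ((eventually_add_smul_notMem_hyperplanes hB hx hnm hgen).and
    ((hC.eventually_ind_add_smul x m).and
      (eventually_all.2 fun i => (hE i).eventually_ind_add_smul x m))).exists
  rw [← hεC, hEq hεU]
  simp only [hεE]

/-- If `v ∈ P` is not an algebraic vertex of the generalized polyhedron
`P`, then for every hyperplane `h` through `v` with unit normal `n` the signed section of
the indicator function of the tangent cone `tcone P v` by `h` agrees, at almost every
point of `h` (w.r.t. the `(d-1)`-dimensional Hausdorff measure restricted to `h`), with a
finite real linear combination of indicator functions of line-cones contained in `h`. -/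
theorem statement_8 {d : ℕ} (P : Set (Euc d)) (hP : IsGenPolyhedron P)
    (v : Euc d) (hvP : v ∈ P) (hv : ¬ IsAlgebraicVertex P v)
    (n : Euc d) (hn : ‖n‖ = 1) :
    ∃ (k : ℕ) (β : Fin k → ℝ) (D : Fin k → Set (Euc d)),
      (∀ i, IsLineConeIn {x : Euc d | ⟪n, x⟫ = ⟪n, v⟫} n (D i)) ∧
      ∀ᵐ x ∂((μH[(d : ℝ) - 1] : Measure (Euc d)).restrict
          {x : Euc d | ⟪n, x⟫ = ⟪n, v⟫}),
        ∃ Lp Lm : ℝ,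
          Tendsto (fun ε : ℝ => ind (tcone P v) (x + ε • n)) (𝓝[>] 0) (𝓝 Lp) ∧
          Tendsto (fun ε : ℝ => ind (tcone P v) (x - ε • n)) (𝓝[>] 0) (𝓝 Lm) ∧
          Lp - Lm = ∑ i, β i * ind (D i) x := by
  have hn0 : n ≠ 0 := by
    rintro rfl
    simp at hn
  obtain ⟨k, α, E, hE, hCE⟩ : IsLinCombOfLineCones (ind (tcone P v)) :=
    not_not.1 fun h => hv ⟨hvP, h⟩
  have hC := hP.tcone v
  have hplus := ae_ind_raySet_eq_sum hC (fun i => (hE i).1) hCE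
    (inner_self_ne_zero.2 hn0) ⟪n, v⟫
  have hminus := ae_ind_raySet_eq_sum hC (fun i => (hE i).1) hCE (m := -n)
    (by rw [inner_neg_right, neg_ne_zero]; exact inner_self_ne_zero.2 hn0) ⟪n, v⟫
  choose g hg hEg using fun i => (hE i).exists_mem_lineConeSpan_ae_eq hn0 ⟪n, v⟫
  obtain ⟨l, β, D, hD, hsum⟩ := exists_eq_sum_of_mem_lineConeSpan
    (Submodule.sum_mem _ (t := Finset.univ) fun i _ => Submodule.smul_mem _ (α i) (hg i))
  refine ⟨l, β, D, hD, ?_⟩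
  filter_upwards [hplus, hminus, ae_all_iff.2 hEg] with x hxp hxm hxg
  refine ⟨ind (raySet (tcone P v) n) x, ind (raySet (tcone P v) (-n)) x,
    hC.tendsto_ind_add_smul x n, ?_, ?_⟩
  · simpa only [smul_neg, ← sub_eq_add_neg] using hC.tendsto_ind_add_smul x (-n)
  · rw [hxp, hxm, ← hsum, ← Finset.sum_sub_distrib]
    simp [Finset.sum_apply, ← hxg, mul_sub]
end
end

section
/- Let w_1, …, w_d ∈ ℝ^d be linearly independent and let v ∈ ℝ^d satisfy ⟨v,w_j⟩ ≠ 0 for every j. Define w*_j = w_j if ⟨v,w_j⟩ > 0 and w*_j = −w_j if ⟨v,w_j⟩ < 0, and let C = pos{w_1,…,w_d} and C* = pos{w*_1,…,w*_d} be the simplicial cones generated by these vectors. Then there exist ε ∈ {−1,1}, coefficients ε_1, …, ε_d ∈ {−1,0,1}, and line-cones D_1, …, D_d such that [C] = ε·[C*] + ∑_{i=1}^d ε_i·[D_i] at Lebesgue-almost every point of ℝ^d. -/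
open MeasureTheory Filter Topology RealInnerProductSpace

noncomputable section

/-- The cone of all nonnegative linear combinations of the vectors `w j`. -/
def posCone {d m : ℕ} (w : Fin m → Euc d) : Set (Euc d) :=
  {x | ∃ t : Fin m → ℝ, (∀ j, 0 ≤ t j) ∧ x = ∑ j, t j • w j}

/-! In coordinates `x = ∑ xⱼ uⱼ` with respect to linearly independent generators `u`, the cone
`pos{u}` is the orthant `{xⱼ ≥ 0 ∀ j}`, and replacing `uₐ` by `-uₐ` turns it into
`{xⱼ ≥ 0 for j ≠ a, xₐ ≤ 0}`. Off the null hyperplane `xₐ = 0` the two indicator functions add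
up to that of `Dₐ = {xⱼ ≥ 0 for j ≠ a}`, which is invariant under translation along `uₐ` and hence
a line-cone. So one flip changes `[C]` into `-[C'] + [Dₐ]` almost everywhere, and flipping the
generators one at a time gives the claim, with the sign `ε` alternating at each flip. -/

open Module Function

lemma exists_inner_eq_basis_repr {E ι : Type*} [NormedAddCommGroup E] [InnerProductSpace ℝ E]
    [FiniteDimensional ℝ E] (b : Basis ι ℝ E) (j : ι) :
    ∃ y : E, ∀ x, ⟪y, x⟫ = b.repr x j :=
  ⟨(InnerProductSpace.toDual ℝ E).symm (LinearMap.toContinuousLinearMap (b.coord j)),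
    fun x => by simp [InnerProductSpace.toDual_symm_apply]⟩

lemma ae_basis_repr_ne_zero {E ι : Type*} [NormedAddCommGroup E] [NormedSpace ℝ E]
    [MeasurableSpace E] [BorelSpace E] [FiniteDimensional ℝ E] (μ : Measure E)
    [μ.IsAddHaarMeasure] (b : Basis ι ℝ E) (a : ι) :
    ∀ᵐ x ∂μ, b.repr x a ≠ 0 := by
  have hker : LinearMap.ker (b.coord a) ≠ ⊤ := fun h => by
    simpa using LinearMap.congr_fun (LinearMap.ker_eq_top.mp h) (b a)
  rw [ae_iff]
  convert Measure.addHaar_submodule μ _ hker using 2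
  ext x
  simp [LinearMap.mem_ker]

lemma sum_update_mul_update {ι : Type*} [Fintype ι] [DecidableEq ι] {α : Type*} (c : ι → ℝ)
    (D : ι → α) (g : α → ℝ) {a : ι} (ha : c a = 0) (e : ℝ) (D' : α) :
    ∑ i, update c a e i * g (update D a D' i) = e * g D' + ∑ i, c i * g (D i) := by
  rw [Finset.sum_eq_add_sum_sdiff_singleton_of_mem (Finset.mem_univ a) fun i => c i * g (D i), ha,
    zero_mul, zero_add, ← Finset.sum_update_of_mem (Finset.mem_univ a)]
  exact Finset.sum_congr rfl fun i _ => (apply_update₂ (fun _ x y => x * g y) c D a e D' i)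

section

variable {d : ℕ}

lemma isConvexPolyhedron_setOf_inner_le {ι : Type*} [Fintype ι] (n : ι → Euc d)
    (hn : ∀ i, n i ≠ 0) (c : ι → ℝ) : IsConvexPolyhedron {x | ∀ i, ⟪n i, x⟫ ≤ c i} := by
  let e := Fintype.equivFin ι
  refine ⟨Fintype.card ι, n ∘ e.symm, c ∘ e.symm, fun k => hn _, ?_⟩
  ext x
  simp [e.symm.forall_congr_left]

lemma IsConvexPolyhedron.isGenPolyhedron {P : Set (Euc d)} (hP : IsConvexPolyhedron P) :
    IsGenPolyhedron P :=
  ⟨1, fun _ => P, fun _ => hP, (Set.iUnion_const P).symm⟩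

lemma isLineCone_univ (hd : 0 < d) : IsLineCone (Set.univ : Set (Euc d)) := by
  refine ⟨IsConvexPolyhedron.isGenPolyhedron ?_, EuclideanSpace.single ⟨0, hd⟩ 1, by simp,
    fun t => Set.image_univ_of_surjective (add_right_surjective _)⟩
  simpa using isConvexPolyhedron_setOf_inner_le (ι := Empty) (d := d) Empty.elim
    (fun i => i.elim) Empty.elim

lemma isLineCone_setOf_basis_repr_nonneg (b : Basis (Fin d) ℝ (Euc d)) (a : Fin d) :
    IsLineCone {x : Euc d | ∀ j ≠ a, 0 ≤ b.repr x j} := by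
  choose y hy using exists_inner_eq_basis_repr b
  have hy0 : ∀ j, y j ≠ 0 := fun j h => by simpa [h] using hy j (b j)
  have hrepr : ∀ (x : Euc d) (t : ℝ) (j : Fin d), j ≠ a → b.repr (x + t • b a) j = b.repr x j :=
    fun x t j hj => by simp [Ne.symm hj]
  refine ⟨IsConvexPolyhedron.isGenPolyhedron ?_, b a, b.ne_zero a, fun t => ?_⟩
  · convert isConvexPolyhedron_setOf_inner_le (fun j : {j // j ≠ a} => -y j)
      (fun j => by simp [hy0]) (fun _ => 0) using 1
    ext x
    simp [hy]
  · ext x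
    refine ⟨?_, fun hx => ⟨x + (-t) • b a, fun j hj => (hrepr x (-t) j hj).symm ▸ hx j hj, ?_⟩⟩
    · rintro ⟨z, hz, rfl⟩ j hj
      exact (hrepr z t j hj).symm ▸ hz j hj
    · simp

lemma mem_posCone_basis_iff (b : Basis (Fin d) ℝ (Euc d)) (x : Euc d) :
    x ∈ posCone ⇑b ↔ ∀ j, 0 ≤ b.repr x j := by
  constructor
  · rintro ⟨t, ht, rfl⟩ j
    rw [b.repr_sum_self]
    exact ht j
  · exact fun h => ⟨fun j => b.repr x j, h, (b.sum_repr x).symm⟩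

lemma mem_posCone_update_neg_iff (b : Basis (Fin d) ℝ (Euc d)) (a : Fin d) (x : Euc d) :
    x ∈ posCone (update ⇑b a (-b a)) ↔ (∀ j ≠ a, 0 ≤ b.repr x j) ∧ b.repr x a ≤ 0 := by
  have hcoe : ⇑(b.unitsSMul (update 1 a (-1))) = update ⇑b a (-b a) := by
    ext1 j
    rcases eq_or_ne j a with rfl | hj
    · simp [b.unitsSMul_apply]
    · simp [b.unitsSMul_apply, hj]
  rw [← hcoe, mem_posCone_basis_iff]
  simp only [Basis.repr_unitsSMul]
  rw [forall_update_iff (1 : Fin d → ℝˣ) fun j c => 0 ≤ c⁻¹ • b.repr x j]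
  simp [and_comm]

lemma ind_posCone_eq_neg_ind_flip_add (b : Basis (Fin d) ℝ (Euc d)) {a : Fin d} {x : Euc d}
    (hx : b.repr x a ≠ 0) :
    ind (posCone ⇑b) x =
      -ind (posCone (update ⇑b a (-b a))) x + ind {x : Euc d | ∀ j ≠ a, 0 ≤ b.repr x j} x := by
  classical
  simp only [ind, Set.indicator_apply, mem_posCone_basis_iff, mem_posCone_update_neg_iff,
    Set.mem_ofPred_eq, ← and_forall_ne (p := fun j => 0 ≤ b.repr x j) a]
  split_ifs <;> grind

lemma exists_ind_posCone_ae_eq_neg_ind_flip_add (b : Basis (Fin d) ℝ (Euc d)) (a : Fin d) :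
    ∃ D : Set (Euc d), IsLineCone D ∧
      ind (posCone ⇑b) =ᵐ[volume] fun x => -ind (posCone (update ⇑b a (-b a))) x + ind D x :=
  ⟨_, isLineCone_setOf_basis_repr_nonneg b a, (ae_basis_repr_ne_zero volume b a).mono
    fun _ hx => ind_posCone_eq_neg_ind_flip_add b hx⟩

lemma exists_ind_posCone_ae_eq_flip {w : Fin d → Euc d} (hw : LinearIndependent ℝ w)
    (s : Finset (Fin d)) :
    ∃ (ε : ℝ) (εc : Fin d → ℝ) (D : Fin d → Set (Euc d)),
      (ε = 1 ∨ ε = -1) ∧ (∀ i, εc i = -1 ∨ εc i = 0 ∨ εc i = 1) ∧ (∀ i ∉ s, εc i = 0) ∧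
      (∀ i, IsLineCone (D i)) ∧
      ind (posCone w) =ᵐ[volume] fun x =>
        ε * ind (posCone fun j => if j ∈ s then -w j else w j) x + ∑ i, εc i * ind (D i) x := by
  induction s using Finset.induction_on with
  | empty =>
    exact ⟨1, 0, fun _ => Set.univ, by simp, by simp, by simp,
      fun i => isLineCone_univ i.pos, by simp⟩
  | @insert a s ha ih =>
    obtain ⟨ε, εc, D, hε, hεc, hεc_zero, hD, hae⟩ := ih
    set u : Fin d → Euc d := fun j => if j ∈ s then -w j else w j
    have hu : LinearIndependent ℝ u := by
      convert hw.units_smul fun j => if j ∈ s then -1 else 1 using 1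
      ext1 j
      by_cases hj : j ∈ s <;> simp [u, hj, Units.smul_def]
    have hflip : update u a (-u a) = fun j => if j ∈ insert a s then -w j else w j := by
      ext1 j
      rcases eq_or_ne j a with rfl | hj
      · simp [u, ha]
      · simp [u, hj]
    obtain ⟨D', hD', hae'⟩ := exists_ind_posCone_ae_eq_neg_ind_flip_add
      (basisOfLinearIndependentOfCardEqFinrank' u hu (by simp)) a
    rw [coe_basisOfLinearIndependentOfCardEqFinrank', hflip] at hae'
    refine ⟨-ε, update εc a ε, update D a D', by rcases hε with rfl | rfl <;> simp, ?_, ?_, ?_, ?_⟩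
    · exact (forall_update_iff εc fun _ c => c = -1 ∨ c = 0 ∨ c = 1).mpr
        ⟨by rcases hε with rfl | rfl <;> simp, fun i _ => hεc i⟩
    · intro i hi
      rw [Finset.mem_insert, not_or] at hi
      rw [update_of_ne hi.1]
      exact hεc_zero i hi.2
    · exact (forall_update_iff D fun _ => IsLineCone).mpr ⟨hD', fun i _ => hD i⟩
    · filter_upwards [hae, hae'] with x hx hx'
      rw [hx, hx', sum_update_mul_update εc D (fun S => ind S x) (hεc_zero a ha)]
      ring

end

theorem statement_12_general {d : ℕ} (w : Fin d → Euc d) (hw : LinearIndependent ℝ w)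
    (v : Euc d) :
    ∃ (ε : ℝ) (εc : Fin d → ℝ) (D : Fin d → Set (Euc d)),
      (ε = 1 ∨ ε = -1) ∧ (∀ i, εc i = -1 ∨ εc i = 0 ∨ εc i = 1) ∧
      (∀ i, IsLineCone (D i)) ∧
      ind (posCone w) =ᵐ[volume] fun x =>
        ε * ind (posCone fun j => if 0 < ⟪v, w j⟫ then w j else -w j) x +
        ∑ i, εc i * ind (D i) x := by
  obtain ⟨ε, εc, D, hε, hεc, -, hD, hae⟩ :=
    exists_ind_posCone_ae_eq_flip hw (Finset.univ.filter fun j => ¬ 0 < ⟪v, w j⟫)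
  refine ⟨ε, εc, D, hε, hεc, hD, ?_⟩
  simpa only [Finset.mem_filter, Finset.mem_univ, true_and, ite_not] using hae

/-- Flipping the generators of a simplicial cone to one side of a
hyperplane changes its indicator function only by a sign and a `{-1,0,1}`-combination of
indicator functions of line-cones, almost everywhere. -/
theorem statement_12 {d : ℕ} (w : Fin d → Euc d) (hw : LinearIndependent ℝ w)
    (v : Euc d) (hv : ∀ j, ⟪v, w j⟫ ≠ 0) :
    ∃ (ε : ℝ) (εc : Fin d → ℝ) (D : Fin d → Set (Euc d)),
      (ε = 1 ∨ ε = -1) ∧ (∀ i, εc i = -1 ∨ εc i = 0 ∨ εc i = 1) ∧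
      (∀ i, IsLineCone (D i)) ∧
      ind (posCone w) =ᵐ[volume] fun x =>
        ε * ind (posCone fun j => if 0 < ⟪v, w j⟫ then w j else -w j) x +
        ∑ i, εc i * ind (D i) x :=
  statement_12_general w hw v
end
end
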